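/- Theorem 1 (average SNR of phase-controlled beamforming in a weakly coupled ULA). Let N ≥ 1 be an integer, let f_c be a real center frequency, let Δf > 0 be a bandwidth, let β be a real constant (β = (δ/c)·sin(φ) in the paper), and let K > 0 be a real constant (K = |γ|²σ_c²P_T/σ_n² in the paper). Then the average received SNR over the band satisfies (K/(N·Δf)) · ∫_{f_c−Δf/2}^{f_c+Δf/2} |Σ_{i=1}^{N} exp(j·2π·(i−1)·β·(f−f_c))|² df = K · [ 1 + 2·Σ_{m=1}^{N−1} (1 − m/N) · sinc(π·β·m·Δf) ], where j denotes the imaginary unit. -/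

import Mathlib

open Real Complex Finset

/-- Unnormalized _root_.sinc function: `_root_.sinc x = sin x / x` for `x ≠ 0`, `_root_.sinc 0 = 1`. -/
noncomputable def sinc (x : ℝ) : ℝ := if x = 0 then 1 else Real.sin x / x

lemma sinc_zero : _root_.sinc 0 = 1 := if_pos rfl

lemma sinc_neg (x : ℝ) : _root_.sinc (-x) = _root_.sinc x := by
  unfold _root_.sinc
  rcases eq_or_ne x 0 with h | h
  · simp [h]
  · rw [if_neg (neg_ne_zero.mpr h), if_neg h, Real.sin_neg, neg_div_neg_eq]

lemma integral_cos_band (fc Δf a : ℝ) (hΔf : Δf ≠ 0) :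
    ∫ f in (fc - Δf / 2)..(fc + Δf / 2), Real.cos (a * (f - fc))
      = Δf * _root_.sinc (a * Δf / 2) := by
  have h1 : ∫ f in (fc - Δf / 2)..(fc + Δf / 2), Real.cos (a * (f - fc))
      = ∫ t in (-(Δf / 2))..(Δf / 2), Real.cos (a * t) := by
    rw [intervalIntegral.integral_comp_sub_right (fun t => Real.cos (a * t)) fc]
    congr 1 <;> ring
  rw [h1]
  rcases eq_or_ne a 0 with ha | ha
  · simp [ha, _root_.sinc_zero]
  · rw [intervalIntegral.integral_comp_mul_left (fun t => Real.cos t) ha, integral_cos]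
    have h2 : a * Δf / 2 ≠ 0 := by
      simp [div_eq_zero_iff, mul_eq_zero, ha, hΔf]
    rw [smul_eq_mul, show a * -(Δf / 2) = -(a * (Δf / 2)) by ring, Real.sin_neg,
      show a * (Δf / 2) = a * Δf / 2 by ring, _root_.sinc, if_neg h2]
    field_simp
    ring

lemma abs_sq_sum_exp (N : ℕ) (θ : ℕ → ℝ) :
    (‖(∑ i ∈ Finset.range N, Complex.exp (Complex.I * (θ i : ℂ)))‖) ^ 2
      = ∑ k ∈ Finset.range N, ∑ l ∈ Finset.range N, Real.cos (θ k - θ l) := by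
  set z := ∑ i ∈ Finset.range N, Complex.exp (Complex.I * (θ i : ℂ)) with hz
  have h0 : Complex.normSq z = (z * (starRingEnd ℂ) z).re := by
    rw [Complex.mul_conj, Complex.ofReal_re]
  rw [Complex.sq_norm, h0, hz, map_sum, Finset.sum_mul_sum]
  rw [show (∑ k ∈ Finset.range N, ∑ l ∈ Finset.range N,
      Complex.exp (Complex.I * (θ k : ℂ)) * (starRingEnd ℂ) (Complex.exp (Complex.I * (θ l : ℂ))))
    = ∑ k ∈ Finset.range N, ∑ l ∈ Finset.range N, Complex.exp ((θ k - θ l : ℝ) * Complex.I) from ?_]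
  · rw [Complex.re_sum]
    refine Finset.sum_congr rfl fun k _ => ?_
    rw [Complex.re_sum]
    exact Finset.sum_congr rfl fun l _ => Complex.exp_ofReal_mul_I_re _
  · refine Finset.sum_congr rfl fun k _ => Finset.sum_congr rfl fun l _ => ?_
    rw [← Complex.exp_conj, ← Complex.exp_add]
    congr 1
    simp [Complex.conj_ofReal, Complex.ofReal_sub]
    ring

lemma reflect_sum (G : ℝ → ℝ) (n : ℕ) :
    ∑ l ∈ Finset.range n, G ((n : ℝ) - l) = ∑ m ∈ Finset.Icc 1 n, G m := by
  rw [← Finset.sum_range_reflect (fun l => G ((n : ℝ) - l)) n,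
    show Finset.Icc 1 n = Finset.Ico 1 (n + 1) by rw [Finset.Ico_add_one_right_eq_Icc],
    Finset.sum_Ico_eq_sum_range]
  refine Finset.sum_congr (by norm_num) fun j hj => ?_
  have hj' : j < n := Finset.mem_range.mp (by simpa using hj)
  congr 1
  have : ((n - 1 - j : ℕ) : ℝ) = (n : ℝ) - 1 - j := by
    have h1 : 1 + j ≤ n := by omega
    push_cast [Nat.sub_sub, Nat.cast_sub h1]
    ring
  rw [this]
  push_cast
  ring

lemma key_double_sum (G : ℝ → ℝ) (hG : ∀ x, G (-x) = G x) (N : ℕ) :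
    ∑ k ∈ Finset.range N, ∑ l ∈ Finset.range N, G ((k : ℝ) - l)
      = N * G 0 + 2 * ∑ m ∈ Finset.Icc 1 (N - 1), ((N : ℝ) - m) * G m := by
  induction N with
  | zero => simp
  | succ n ih =>
    have expand : ∑ k ∈ Finset.range (n+1), ∑ l ∈ Finset.range (n+1), G ((k : ℝ) - l)
        = (∑ k ∈ Finset.range n, ∑ l ∈ Finset.range n, G ((k : ℝ) - l))
          + G 0 + 2 * ∑ l ∈ Finset.range n, G ((n : ℝ) - l) := by
      rw [Finset.sum_range_succ]
      rw [Finset.sum_range_succ (fun l => G ((n : ℝ) - l)) n]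
      simp only [Finset.sum_range_succ]
      have hswap : ∑ k ∈ Finset.range n, G ((k : ℝ) - n) = ∑ k ∈ Finset.range n, G ((n : ℝ) - k) :=
        Finset.sum_congr rfl fun k _ => by rw [show ((k:ℝ) - n) = -((n:ℝ) - k) by ring, hG]
      rw [Finset.sum_add_distrib, hswap]
      ring_nf
    rw [expand, ih, reflect_sum]
    have hsplit : ∑ m ∈ Finset.Icc 1 n, (((n:ℝ) + 1) - m) * G m
        = (∑ m ∈ Finset.Icc 1 n, ((n:ℝ) - m) * G m) + ∑ m ∈ Finset.Icc 1 n, G m := by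
      rw [← Finset.sum_add_distrib]
      exact Finset.sum_congr rfl fun m _ => by ring
    have htrunc : ∑ m ∈ Finset.Icc 1 n, ((n:ℝ) - m) * G m
        = ∑ m ∈ Finset.Icc 1 (n - 1), ((n:ℝ) - m) * G m := by
      refine (Finset.sum_subset (Finset.Icc_subset_Icc_right (Nat.sub_le n 1)) ?_).symm
      intro m hm hnm
      simp only [Finset.mem_Icc] at hm hnm
      have : m = n := by omega
      subst this
      simp
    rw [show n + 1 - 1 = n from rfl]
    push_cast
    rw [hsplit, htrunc]
    ring

/-- Theorem 1: average received SNR of phase-controlled beamforming in a weakly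
coupled `N`-element ULA over a bandwidth `Δf` centered at `f_c`, where
`β = (δ/c)·sin φ` and `K = |γ|²σ_c²P_T/σ_n²`. -/
theorem avg_snr_phase_controlled_weakly_coupled
    (N : ℕ) (hN : 1 ≤ N) (fc Δf β K : ℝ) (hΔf : 0 < Δf) (hK : 0 < K) :
    (K / (N * Δf)) *
      ∫ f in (fc - Δf / 2)..(fc + Δf / 2),
        (‖(∑ i ∈ Finset.range N,
          Complex.exp (Complex.I * (2 * π * (i : ℝ) * β * (f - fc))))‖) ^ 2
    = K * (1 + 2 * ∑ m ∈ Finset.Icc 1 (N - 1),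
        (1 - (m : ℝ) / N) * _root_.sinc (π * β * m * Δf)) := by
  have hN0 : (N : ℝ) ≠ 0 := Nat.cast_ne_zero.mpr (by omega)
  have hΔ : Δf ≠ 0 := ne_of_gt hΔf
  set G : ℝ → ℝ := fun x => _root_.sinc (π * β * x * Δf) with hGdef
  have hG : ∀ x, G (-x) = G x := fun x => by
    simp only [hGdef]
    rw [show π * β * (-x) * Δf = -(π * β * x * Δf) by ring, _root_.sinc_neg]
  have hpt : ∀ f : ℝ, (‖(∑ i ∈ Finset.range N,
        Complex.exp (Complex.I * (2 * π * (i : ℝ) * β * (f - fc))))‖) ^ 2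
      = ∑ k ∈ Finset.range N, ∑ l ∈ Finset.range N,
          Real.cos ((2 * π * ((k : ℝ) - l) * β) * (f - fc)) := by
    intro f
    have hcast : (∑ i ∈ Finset.range N,
          Complex.exp (Complex.I * (2 * π * (i : ℝ) * β * (f - fc))))
        = ∑ i ∈ Finset.range N,
            Complex.exp (Complex.I * (((2 * π * (i : ℝ) * β * (f - fc) : ℝ)) : ℂ)) := by
      refine Finset.sum_congr rfl fun i _ => ?_
      norm_cast
    rw [hcast, abs_sq_sum_exp N (fun i => 2 * π * (i : ℝ) * β * (f - fc))]
    refine Finset.sum_congr rfl fun k _ => Finset.sum_congr rfl fun l _ => ?_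
    congr 1; ring
  have hint : (∫ f in (fc - Δf / 2)..(fc + Δf / 2),
        (‖(∑ i ∈ Finset.range N,
          Complex.exp (Complex.I * (2 * π * (i : ℝ) * β * (f - fc))))‖) ^ 2)
      = Δf * ∑ k ∈ Finset.range N, ∑ l ∈ Finset.range N, G ((k : ℝ) - l) := by
    simp only [hpt]
    have h1 := intervalIntegral.integral_finset_sum (a := fc - Δf/2) (b := fc + Δf/2)
      (μ := MeasureTheory.volume) (s := Finset.range N)
      (f := fun (k : ℕ) (f : ℝ) => ∑ l ∈ Finset.range N,
        Real.cos ((2 * π * ((k : ℝ) - l) * β) * (f - fc)))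
      (fun k _ => (by fun_prop : Continuous (fun f => ∑ l ∈ Finset.range N,
        Real.cos ((2 * π * ((k : ℝ) - l) * β) * (f - fc)))).intervalIntegrable _ _)
    rw [h1, Finset.mul_sum]
    refine Finset.sum_congr rfl fun k _ => ?_
    have h2 := intervalIntegral.integral_finset_sum (a := fc - Δf/2) (b := fc + Δf/2)
      (μ := MeasureTheory.volume) (s := Finset.range N)
      (f := fun (l : ℕ) (f : ℝ) => Real.cos ((2 * π * ((k : ℝ) - l) * β) * (f - fc)))
      (fun l _ => (by fun_prop :
        Continuous (fun f => Real.cos ((2 * π * ((k : ℝ) - l) * β) * (f - fc)))).intervalIntegrable _ _)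
    rw [h2, Finset.mul_sum]
    refine Finset.sum_congr rfl fun l _ => ?_
    rw [integral_cos_band fc Δf _ hΔ]
    congr 1
    simp only [hGdef]
    congr 1
    ring
  rw [hint, key_double_sum G hG N]
  have hG0 : G 0 = 1 := by
    simp only [hGdef]
    rw [show π * β * (0:ℝ) * Δf = 0 by ring, _root_.sinc_zero]
  have hS : ∑ m ∈ Finset.Icc 1 (N - 1), ((N : ℝ) - m) * G m
      = N * ∑ m ∈ Finset.Icc 1 (N - 1), (1 - (m : ℝ) / N) * _root_.sinc (π * β * m * Δf) := by
    rw [Finset.mul_sum]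
    refine Finset.sum_congr rfl fun m _ => ?_
    simp only [hGdef]
    field_simp
  rw [hG0, hS]
  field_simp
  ring_nf
  simp only [show ∀ x : ℝ, x * Δf * π * β = Δf * π * β * x from fun x => by ring]
  congr 2
  exact Finset.sum_congr rfl fun x _ => by ring
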